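/- If Q is a stateless program, then for every effect (s, s') ∈ Effects(Q*), there is an execution of Q* from shared heap s with its initial thread configurations back to its initial thread configurations at shared heap s', i.e., (s, cf_init(Q*)) →* (s', cf_init(Q*)). -/
import Mathlib


namespace Paper

/-- Threads of the core language. -/
inductive Thread (C : Type) : Type where
  | prim : C → Thread C
  | skip : Thread C
  | seq : Thread C → Thread C → Thread C
  | choice : Thread C → Thread C → Thread C
  | star : Thread C → Thread C
  | atomic : Thread C → Thread C

/-- Heaps: partial maps from variables and addresses to naturals. -/
abbrev Heap := (String ⊕ ℕ) → Option ℕ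

def emp : Heap := fun _ => none

/-- Memory-cell (address) part of the domain of a heap. -/
def addrDom (h : Heap) : Set ℕ := {a | h (Sum.inr a) ≠ none}

/-- Disjointness on memory cells. -/
def Disj (h₁ h₂ : Heap) : Prop := addrDom h₁ ∩ addrDom h₂ = ∅

abbrev Config (C : Type) := Thread C × Heap

/-- Thread-configuration maps (partial over thread identifiers). -/
abbrev Cf (C : Type) := ℕ → Option (Config C)

/-- A state (s, cf) is separated. -/
def Separated {C : Type} (s : Heap) (cf : Cf C) : Prop :=
  (∀ i c, cf i = some c → Disj s c.2) ∧
  (∀ i j ci cj, i ≠ j → cf i = some ci → cf j = some cj → Disj ci.2 cj.2)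

variable {C : Type}

mutual
  /-- Sequential small-step semantics, parameterized by the semantics `prim`
  of primitive commands (relating shared/owned heaps before and after). -/
  inductive SeqStep (prim : C → Heap → Heap → Heap → Heap → Prop) :
      Heap → Config C → Heap → Config C → Prop where
    | primStep {c s o s' o'} : prim c s o s' o' →
        SeqStep prim s (Thread.prim c, o) s' (Thread.skip, o')
    | seqL {s T₁ o s' T₁' o'} (T₂ : Thread C) :
        SeqStep prim s (T₁, o) s' (T₁', o') →
        SeqStep prim s (Thread.seq T₁ T₂, o) s' (Thread.seq T₁' T₂, o')
    | seqSkip {s o} (T : Thread C) :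
        SeqStep prim s (Thread.seq Thread.skip T, o) s (T, o)
    | choiceL {s T₁ o s' T₁' o'} (T₂ : Thread C) :
        SeqStep prim s (T₁, o) s' (T₁', o') →
        SeqStep prim s (Thread.choice T₁ T₂, o) s' (T₁', o')
    | choiceR {s T₂ o s' T₂' o'} (T₁ : Thread C) :
        SeqStep prim s (T₂, o) s' (T₂', o') →
        SeqStep prim s (Thread.choice T₁ T₂, o) s' (T₂', o')
    | starUnfold {s o} (T : Thread C) :
        SeqStep prim s (Thread.star T, o) s (Thread.seq T (Thread.star T), o)
    | starExit {s o} (T : Thread C) :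
        SeqStep prim s (Thread.star T, o) s (Thread.skip, o)
    | atomic {s T o s' o'} :
        SeqSteps prim s (T, o) s' (Thread.skip, o') →
        SeqStep prim s (Thread.atomic T, o) s' (Thread.skip, o')

  /-- Finitely many sequential steps. -/
  inductive SeqSteps (prim : C → Heap → Heap → Heap → Heap → Prop) :
      Heap → Config C → Heap → Config C → Prop where
    | refl {s c} : SeqSteps prim s c s c
    | step {s c s' c' s'' c''} : SeqStep prim s c s' c' →
        SeqSteps prim s' c' s'' c'' → SeqSteps prim s c s'' c''
end

variable (prim : C → Heap → Heap → Heap → Heap → Prop)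

/-- Parallel (program) step: one thread steps sequentially and the
resulting state must be separated. -/
def ParStep (st st' : Heap × Cf C) : Prop :=
  ∃ i c c', st.2 i = some c ∧ SeqStep prim st.1 c st'.1 c' ∧
    st'.2 = Function.update st.2 i (some c') ∧ Separated st'.1 st'.2

def ParSteps : Heap × Cf C → Heap × Cf C → Prop :=
  Relation.ReflTransGen (ParStep prim)

/-- A program is a parallel composition of finitely many threads. -/
abbrev Program (C : Type) := List (Thread C)

/-- `Q*` : Kleene star applied to every thread. -/
def starP (P : Program C) : Program C := P.map Thread.star

/-- Initial thread configurations: each thread with the empty owned heap. -/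
def cfInit (P : Program C) : Cf C := fun i => (P[i]?).map fun T => (T, emp)

/-- Reachable shared heaps of a program from initial shared heap `sinit`. -/
def Reach (sinit : Heap) (P : Program C) : Set Heap :=
  {s | ∃ cf, ParSteps prim (sinit, cfInit P) (s, cf)}

/-- Effects: single-step shared-heap updates along executions. -/
def Effects (sinit : Heap) (P : Program C) : Set (Heap × Heap) :=
  {p | ∃ cf cf', ParSteps prim (sinit, cfInit P) (p.1, cf) ∧
       ParStep prim (p.1, cf) (p.2, cf')}

/-- Statelessness: every thread of `Q`, from any shared heap reachable by `Q*`
with empty owned heap, steps in one step to `(skip, emp)`. -/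
def Stateless (sinit : Heap) (Q : Program C) : Prop :=
  ∀ T ∈ Q, ∀ s ∈ Reach prim sinit (starP Q), ∀ s' c,
    SeqStep prim s (T, emp) s' c → c = (Thread.skip, emp)

/-- Assumption 1: sequential steps preserve separation. -/
def PreservesSep : Prop :=
  ∀ s c s' c', SeqStep prim s c s' c' → Disj s c.2 → Disj s' c'.2

/-- `Q` is a stateless effect summary of `P`. -/
def IsSummary (sinit : Heap) (P Q : Program C) : Prop :=
  Stateless prim sinit Q ∧
  ∀ T ∈ P, Effects prim sinit (T :: starP Q) ⊆ Effects prim sinit (starP Q)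

/-- Sequential-step successors of a set of views. -/
def post (X : Set (Heap × Config C)) : Set (Heap × Config C) :=
  {v' | ∃ v ∈ X, SeqStep prim v.1 v.2 v'.1 v'.2}

/-- Interference successors: replace the shared heap of a view by the result
of one step of the summary `Q` from its initial configuration, subject to
separation of the resulting view. -/
def env (Q : Program C) (X : Set (Heap × Config C)) : Set (Heap × Config C) :=
  {v' | Disj v'.1 v'.2.2 ∧ ∃ s cf', (s, v'.2) ∈ X ∧
        ParStep prim (s, cfInit Q) (v'.1, cf')}

/-- Initial views. -/
def X₀ (sinit : Heap) (P : Program C) : Set (Heap × Config C) :=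
  {v | v.1 = sinit ∧ ∃ T ∈ P, v.2 = (T, emp)}

/-- The least fixed point of the thread-modular analysis with interference
computed by the candidate summary `Q`. -/
def Fix (sinit : Heap) (P Q : Program C) : Set (Heap × Config C) :=
  ⋂₀ {X | X₀ sinit P ⊆ X ∧ post prim X ⊆ X ∧ env prim Q X ⊆ X}

/-- Shared heaps occurring in the fixed point. -/
def FixHeaps (sinit : Heap) (P Q : Program C) : Set Heap :=
  {s | ∃ c, (s, c) ∈ Fix prim sinit P Q}

lemma disj_emp (h : Heap) : Disj h emp := by
  simp [Disj, addrDom, emp]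

lemma emp_disj (h : Heap) : Disj emp h := by
  ext a; simp [Disj, addrDom, emp]

/-- All owned heaps in a configuration map are empty. -/
def AllEmp (cf : Cf C) : Prop := ∀ i c, cf i = some c → c.2 = emp

lemma sep_of_allEmp {cf : Cf C} (h : AllEmp cf) (s : Heap) : Separated s cf := by
  constructor
  · intro i c hc; rw [h i c hc]; exact disj_emp s
  · intro i j ci cj _ hi hj; rw [h i ci hi]; exact emp_disj _

lemma allEmp_cfInit (P : Program C) : AllEmp (cfInit P) := by
  intro i c hc
  simp only [cfInit, Option.map_eq_some_iff] at hc
  obtain ⟨T, _, rfl⟩ := hc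
  rfl

/-- Invariant on reachable configurations of `Q*`. -/
def Inv (Q : Program C) (cf : Cf C) : Prop :=
  ∀ i c, cf i = some c → ∃ T, Q[i]? = some T ∧
    (c = (Thread.star T, emp) ∨ c = (Thread.seq T (Thread.star T), emp) ∨
     c = (Thread.seq Thread.skip (Thread.star T), emp) ∨ c = (Thread.skip, emp))

lemma cfInit_star (Q : Program C) (i : ℕ) :
    cfInit (starP Q) i = (Q[i]?).map fun T => (Thread.star T, emp) := by
  simp only [cfInit, starP, List.getElem?_map, Option.map_map]
  rfl

lemma skip_no_step {prim : C → Heap → Heap → Heap → Heap → Prop}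
    {s o s' c'} (h : SeqStep prim s (Thread.skip, o) s' c') : False := by
  cases h

lemma inv_init (Q : Program C) : Inv Q (cfInit (starP Q)) := by
  intro i c hc
  rw [cfInit_star] at hc
  simp only [Option.map_eq_some_iff] at hc
  obtain ⟨T, hT, rfl⟩ := hc
  exact ⟨T, hT, Or.inl rfl⟩

lemma inv_preserved (sinit : Heap) (Q : Program C) (hQ : Stateless prim sinit Q) :
    ∀ st, ParSteps prim (sinit, cfInit (starP Q)) st → Inv Q st.2 := by
  intro st h
  induction h with
  | refl => exact inv_init Q
  | @tail b st hsteps hstep ih =>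
    obtain ⟨s, cf⟩ := b
    obtain ⟨i, c, c', hci, hseq, hcf', _⟩ := hstep
    intro j cj hcj
    simp only at hcf'
    rw [hcf'] at hcj
    by_cases hij : j = i
    · subst hij
      rw [Function.update_self] at hcj
      injection hcj with hcj; subst hcj
      obtain ⟨T, hT, hforms⟩ := ih j c hci
      refine ⟨T, hT, ?_⟩
      have hreach : s ∈ Reach prim sinit (starP Q) := ⟨cf, hsteps⟩
      have hTQ : T ∈ Q := List.mem_of_getElem? hT
      rcases hforms with rfl | rfl | rfl | rfl
      · cases hseq with
        | starUnfold => exact Or.inr (Or.inl rfl)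
        | starExit => exact Or.inr (Or.inr (Or.inr rfl))
      · cases hseq with
        | seqL _ h =>
          have := hQ T hTQ s hreach _ _ h
          rw [Prod.mk.injEq] at this
          obtain ⟨rfl, rfl⟩ := this
          exact Or.inr (Or.inr (Or.inl rfl))
        | seqSkip => exact Or.inl rfl
      · cases hseq with
        | seqL _ h => exact absurd h skip_no_step
        | seqSkip => exact Or.inl rfl
      · exact absurd hseq skip_no_step
    · rw [Function.update_of_ne hij] at hcj
      exact ih j cj hcj

/-- effects of `Q*` for stateless `Q` give repeated executions of
`Q*` from and back to its initial thread configurations. -/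
theorem stateless_effects_give_repeated_executions
    (hps : PreservesSep prim)
    (sinit : Heap) (Q : Program C) (hQ : Stateless prim sinit Q)
    (s s' : Heap) (heff : (s, s') ∈ Effects prim sinit (starP Q)) :
    ParSteps prim (s, cfInit (starP Q)) (s', cfInit (starP Q)) := by
  obtain ⟨cf, cf', hsteps, hstep⟩ := heff
  have hinv : Inv Q cf := inv_preserved prim sinit Q hQ (s, cf) hsteps
  obtain ⟨i, c, c', hci, hseq, _, _⟩ := hstep
  obtain ⟨T, hT, hforms⟩ := hinv i c hci
  have hreach : s ∈ Reach prim sinit (starP Q) := ⟨cf, hsteps⟩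
  have hTQ : T ∈ Q := List.mem_of_getElem? hT
  have hinit : cfInit (starP Q) i = some (Thread.star T, emp) := by
    rw [cfInit_star, hT]; rfl
  rcases hforms with rfl | rfl | rfl | rfl
  · -- star T : heap unchanged
    cases hseq <;> exact Relation.ReflTransGen.refl
  · -- seq T (star T) : the interesting case
    cases hseq with
    | seqL _ h =>
      have hc2 := hQ T hTQ s hreach _ _ h
      rw [Prod.mk.injEq] at hc2
      obtain ⟨rfl, rfl⟩ := hc2
      -- construct the 3-step execution
      set cf₀ := cfInit (starP Q) with hcf₀
      set cf₁ := Function.update cf₀ i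
        (some (Thread.seq T (Thread.star T), emp)) with hcf₁
      set cf₂ := Function.update cf₀ i
        (some (Thread.seq Thread.skip (Thread.star T), emp)) with hcf₂
      have hAE₀ : AllEmp cf₀ := allEmp_cfInit _
      have hAE : ∀ (d : Config C), d.2 = emp → AllEmp (Function.update cf₀ i (some d)) := by
        intro d hd j cj hcj
        by_cases hij : j = i
        · subst hij; rw [Function.update_self] at hcj
          injection hcj with hcj; subst hcj; exact hd
        · rw [Function.update_of_ne hij] at hcj; exact hAE₀ j cj hcj
      have step1 : ParStep prim (s, cf₀) (s, cf₁) :=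
        ⟨i, _, _, hinit, SeqStep.starUnfold T, rfl,
          sep_of_allEmp (hAE _ rfl) s⟩
      have step2 : ParStep prim (s, cf₁) (s', cf₂) := by
        refine ⟨i, _, _, Function.update_self .., SeqStep.seqL _ h, ?_,
          sep_of_allEmp (hAE _ rfl) s'⟩
        simp [hcf₁, hcf₂, Function.update_idem]
      have step3 : ParStep prim (s', cf₂) (s', cf₀) := by
        refine ⟨i, _, _, Function.update_self .., SeqStep.seqSkip _, ?_,
          sep_of_allEmp hAE₀ s'⟩
        simp only [hcf₂, Function.update_idem]
        rw [← hinit, Function.update_eq_self]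
      exact Relation.ReflTransGen.head step1
        (Relation.ReflTransGen.head step2 (Relation.ReflTransGen.single step3))
    | seqSkip => exact Relation.ReflTransGen.refl
  · cases hseq with
    | seqL _ h => exact absurd h skip_no_step
    | seqSkip => exact Relation.ReflTransGen.refl
  · exact absurd hseq skip_no_step

end Paper
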